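/- Let K be a linearly ordered field which is Bolzano complete, i.e., every bounded infinite subset of K has a cluster point. Then K is Archimedean. -/

import Mathlib

/-!
If `|x|` bounded every natural number, `ℕ` would be a bounded infinite subset of `K` and so would
have a cluster point. But distinct naturals are at distance at least `1`, and a set whose points are
uniformly separated has no cluster point: two of its points within `1/2` of it would be closer
than `1` to each other.
-/

section ClusterPoint

variable {K : Type*} [Field K] [LinearOrder K] [IsStrictOrderedRing K]

def IsClusterPoint (A : Set K) (x : K) : Prop :=
  ∀ ε : K, 0 < ε → ∃ a ∈ A, a ≠ x ∧ |a - x| < ε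

theorem not_isClusterPoint_of_separated {A : Set K} {δ : K} (hδ : 0 < δ)
    (hA : ∀ a ∈ A, ∀ b ∈ A, a ≠ b → δ ≤ |a - b|) (x : K) : ¬ IsClusterPoint A x := by
  intro hx
  obtain ⟨a, ha, hax, hax_lt⟩ := hx (δ / 2) (half_pos hδ)
  -- Asking for a point strictly closer to `x` than `a` forces it to differ from `a`.
  obtain ⟨b, hb, -, hbx_lt⟩ := hx |a - x| (abs_pos.mpr (sub_ne_zero.mpr hax))
  have hab : a ≠ b := by
    rintro rfl
    exact lt_irrefl _ hbx_lt
  have : |a - b| < δ :=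
    calc |a - b| ≤ |a - x| + |x - b| := abs_sub_le a x b
      _ = |a - x| + |b - x| := by rw [abs_sub_comm x b]
      _ < δ / 2 + δ / 2 := add_lt_add hax_lt (hbx_lt.trans hax_lt)
      _ = δ := add_halves δ
  exact (hA a ha b hb hab).not_gt this

theorem one_le_abs_natCast_sub_natCast {m n : ℕ} (h : m ≠ n) : (1 : K) ≤ |(m : K) - n| := by
  have : (1 : ℤ) ≤ |(m : ℤ) - n| := Int.one_le_abs (by omega)
  exact_mod_cast this

end ClusterPoint

/-- A Bolzano complete linearly ordered field (every bounded infinite set has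
a cluster point) is Archimedean. -/
theorem stmt_14 {K : Type*} [Field K] [LinearOrder K] [IsStrictOrderedRing K]
    (hB : ∀ A : Set K, (∃ c d : K, A ⊆ Set.Icc c d) → A.Infinite →
      ∃ x : K, ∀ ε : K, 0 < ε → ∃ a ∈ A, a ≠ x ∧ |a - x| < ε) :
    ∀ x : K, ∃ n : ℕ, |x| < (n : K) := by
  intro x
  by_contra! hx
  have hbounded : Set.range ((↑) : ℕ → K) ⊆ Set.Icc 0 |x| := by
    rintro _ ⟨n, rfl⟩
    exact ⟨n.cast_nonneg, hx n⟩
  obtain ⟨y, hy⟩ := hB _ ⟨0, |x|, hbounded⟩ (Set.infinite_range_of_injective Nat.cast_injective)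
  refine not_isClusterPoint_of_separated one_pos ?_ y hy
  rintro _ ⟨m, rfl⟩ _ ⟨n, rfl⟩ hmn
  exact one_le_abs_natCast_sub_natCast (ne_of_apply_ne _ hmn)
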